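/- arXiv:2102.12761 — 2 statements merged into one kernel-verified Lean document; each statement's English description precedes it below -/
import Mathlib

section
/- Let q ∈ (0,1) and s ∈ [0,1]. The series Σ_{k=0}^∞ ζ_{q,s}(k) = Σ_{k=0}^∞ (1−q²)·q^k·√s / √(1 − s·q^{2(k+1)}) is summable, and its sum satisfies Σ_{k=0}^∞ ζ_{q,s}(k) ≤ −((1−q²)/(q·ln q)) · arcsin(√s). -/
/-! With `C = −(1−q²)/(q ln q) ≥ 0`, the function `F(x) = C·arcsin(√s·q^x)` satisfies
`F'(x) = −ζ_{q,s}(x−1)` for `x > 0`. As `ζ_{q,s}` decreases on `(−1,∞)`, the mean value theorem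
gives `ζ_{q,s}(k) ≤ F(k) − F(k+1)`, so the partial sums telescope to at most
`F(0) = C·arcsin(√s)`. -/

/-- The function `ζ_{q,s}(x) := (1−q²)·q^x·√s / √(1 − s·q^{2(x+1)})`
(with `q ^ x` the real power). -/
noncomputable def zeta (q s x : ℝ) : ℝ :=
  (1 - q ^ 2) * q ^ x * Real.sqrt s / Real.sqrt (1 - s * q ^ (2 * (x + 1)))

open Real Set

theorem summable_and_tsum_le_of_le_sub_succ {f g : ℕ → ℝ} (hf : ∀ n, 0 ≤ f n)
    (hg : ∀ n, 0 ≤ g n) (hfg : ∀ n, f n ≤ g n - g (n + 1)) :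
    Summable f ∧ ∑' n, f n ≤ g 0 := by
  have partial_le : ∀ n, ∑ i ∈ Finset.range n, f i ≤ g 0 := fun n =>
    calc ∑ i ∈ Finset.range n, f i ≤ ∑ i ∈ Finset.range n, (g i - g (i + 1)) :=
          Finset.sum_le_sum fun i _ => hfg i
      _ = g 0 - g n := Finset.sum_range_sub' g n
      _ ≤ g 0 := sub_le_self _ (hg n)
  exact ⟨summable_of_sum_range_le hf partial_le, Real.tsum_le_of_sum_range_le hf partial_le⟩

section

variable {q s : ℝ}

theorem zeta_nonneg (hq0 : 0 ≤ q) (hq1 : q ≤ 1) (x : ℝ) : 0 ≤ zeta q s x := by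
  have : 0 ≤ 1 - q ^ 2 := by nlinarith
  unfold zeta
  positivity

theorem zeta_antitoneOn (hq0 : 0 < q) (hq1 : q < 1) (hs0 : 0 ≤ s) (hs1 : s ≤ 1) :
    AntitoneOn (zeta q s) (Ioi (-1)) := by
  intro a ha b _ hab
  have hq2 : 0 ≤ 1 - q ^ 2 := by nlinarith
  have num_le : (1 - q ^ 2) * q ^ b * √s ≤ (1 - q ^ 2) * q ^ a * √s := by
    have := rpow_le_rpow_of_exponent_ge hq0 hq1.le hab
    gcongr
  have den_le : √(1 - s * q ^ (2 * (a + 1))) ≤ √(1 - s * q ^ (2 * (b + 1))) := by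
    have := rpow_le_rpow_of_exponent_ge hq0 hq1.le (by linarith : 2 * (a + 1) ≤ 2 * (b + 1))
    gcongr
  have den_pos : 0 < √(1 - s * q ^ (2 * (a + 1))) := by
    have : q ^ (2 * (a + 1)) < 1 := rpow_lt_one hq0.le hq1 (by linarith [mem_Ioi.1 ha])
    apply sqrt_pos.2
    nlinarith [rpow_nonneg hq0.le (2 * (a + 1))]
  exact div_le_div₀ (by positivity) num_le den_pos den_le

noncomputable def zetaPotential (q s x : ℝ) : ℝ :=
  -((1 - q ^ 2) / (q * log q)) * arcsin (√s * q ^ x)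

theorem continuous_zetaPotential (hq0 : 0 < q) : Continuous (zetaPotential q s) :=
  continuous_const.mul (continuous_arcsin.comp
    (continuous_const.mul (continuous_const.rpow continuous_id fun _ => Or.inl hq0.ne')))

theorem zetaPotential_nonneg (hq0 : 0 < q) (hq1 : q < 1) (x : ℝ) : 0 ≤ zetaPotential q s x := by
  have hC : 0 ≤ -((1 - q ^ 2) / (q * log q)) := by
    rw [neg_nonneg]
    exact div_nonpos_of_nonneg_of_nonpos (by nlinarith)
      (mul_nonpos_of_nonneg_of_nonpos hq0.le (log_neg hq0 hq1).le)
  exact mul_nonneg hC (arcsin_nonneg.2 (by positivity))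

theorem zetaPotential_zero : zetaPotential q s 0 = -((1 - q ^ 2) / (q * log q)) * arcsin √s := by
  simp [zetaPotential]

theorem hasDerivAt_zetaPotential (hq0 : 0 < q) (hq1 : q < 1) (hs0 : 0 ≤ s) (hs1 : s ≤ 1)
    {x : ℝ} (hx : 0 < x) : HasDerivAt (zetaPotential q s) (-zeta q s (x - 1)) x := by
  have arg_nonneg : 0 ≤ √s * q ^ x := by positivity
  have arg_lt_one : √s * q ^ x < 1 :=
    calc √s * q ^ x ≤ 1 * q ^ x := by gcongr; exact sqrt_le_one.2 hs1
      _ < 1 := by rw [one_mul]; exact rpow_lt_one hq0.le hq1 hx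
  have arg_sq : (√s * q ^ x) ^ 2 = s * q ^ (2 * (x - 1 + 1)) := by
    rw [mul_pow, sq_sqrt hs0, ← rpow_natCast, ← rpow_mul hq0.le]
    ring_nf
  have den_pos : 0 < √(1 - (√s * q ^ x) ^ 2) := sqrt_pos.2 (by nlinarith)
  have := (((hasDerivAt_arcsin (by linarith) arg_lt_one.ne).comp x
    ((hasStrictDerivAt_const_rpow hq0 x).hasDerivAt.const_mul √s)).const_mul
    (-((1 - q ^ 2) / (q * log q))))
  refine this.congr_deriv ?_
  rw [zeta, ← arg_sq, rpow_sub hq0, rpow_one]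
  field_simp [hq0.ne', (log_neg hq0 hq1).ne, den_pos.ne']

theorem zeta_le_zetaPotential_sub (hq0 : 0 < q) (hq1 : q < 1) (hs0 : 0 ≤ s) (hs1 : s ≤ 1)
    {x : ℝ} (hx : 0 ≤ x) : zeta q s x ≤ zetaPotential q s x - zetaPotential q s (x + 1) := by
  obtain ⟨c, hc, hslope⟩ := exists_hasDerivAt_eq_slope (zetaPotential q s) _ (lt_add_one x)
    (continuous_zetaPotential hq0).continuousOn
    (fun y hy => hasDerivAt_zetaPotential hq0 hq1 hs0 hs1 (hx.trans_lt hy.1))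
  have potential_sub : zetaPotential q s x - zetaPotential q s (x + 1) = zeta q s (c - 1) := by
    rw [add_sub_cancel_left, div_one] at hslope
    linarith
  rw [potential_sub]
  exact zeta_antitoneOn hq0 hq1 hs0 hs1 (mem_Ioi.2 (by linarith [hc.1]))
    (mem_Ioi.2 (by linarith)) (by linarith [hc.2])

end

/-- For `q ∈ (0,1)` and `s ∈ [0,1]`, the series `Σ_{k=0}^∞ ζ_{q,s}(k)` is summable and its
sum is at most `−((1−q²)/(q·ln q)) · arcsin(√s)`. -/
theorem stmt6 (q s : ℝ) (hq : q ∈ Set.Ioo (0 : ℝ) 1) (hs : s ∈ Set.Icc (0 : ℝ) 1) :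
    Summable (fun k : ℕ => zeta q s k) ∧
    ∑' k : ℕ, zeta q s k ≤ -((1 - q ^ 2) / (q * Real.log q)) * Real.arcsin (Real.sqrt s) := by
  obtain ⟨hq0, hq1⟩ := hq
  obtain ⟨hs0, hs1⟩ := hs
  obtain ⟨hsum, htsum⟩ := summable_and_tsum_le_of_le_sub_succ
    (g := fun n : ℕ => zetaPotential q s n) (fun k => zeta_nonneg hq0.le hq1.le k)
    (fun k => zetaPotential_nonneg hq0 hq1 k) fun k => by
      push_cast
      exact zeta_le_zetaPotential_sub hq0 hq1 hs0 hs1 k.cast_nonneg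
  refine ⟨hsum, htsum.trans_eq ?_⟩
  rw [Nat.cast_zero, zetaPotential_zero]
end

section
/- For every fixed s ∈ [0,1] one has lim_{q→1⁻} Σ_{k=0}^∞ (1−q²)·q^k·√s / √(1 − s·q^{2(k+1)}) = 2·arcsin(√s). -/
open Real Filter Topology Set

theorem hasSum_sub_succ_of_antitone {f : ℕ → ℝ} {l : ℝ} (hf : Antitone f)
    (hlim : Tendsto f atTop (𝓝 l)) : HasSum (fun n ↦ f n - f (n + 1)) (f 0 - l) := by
  rw [hasSum_iff_tendsto_nat_of_nonneg (fun n ↦ sub_nonneg.2 (hf n.le_succ))]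
  simpa only [Finset.sum_range_sub'] using tendsto_const_nhds.sub hlim

namespace Real

theorem exists_arcsin_sub_eq {a b : ℝ} (ha : -1 ≤ a) (hab : a < b) (hb : b ≤ 1) :
    ∃ c ∈ Ioo a b, arcsin b - arcsin a = (b - a) / √(1 - c ^ 2) := by
  obtain ⟨c, hc, hslope⟩ := exists_hasDerivAt_eq_slope arcsin (fun x ↦ 1 / √(1 - x ^ 2)) hab
    continuous_arcsin.continuousOn
    fun x hx ↦ hasDerivAt_arcsin (by linarith [hx.1]) (by linarith [hx.2])
  refine ⟨c, hc, ?_⟩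
  rw [eq_div_iff (sub_ne_zero.2 hab.ne')] at hslope
  rw [← hslope]
  field_simp

theorem sub_div_sqrt_le_arcsin_sub {a b : ℝ} (ha : 0 ≤ a) (hab : a ≤ b) (hb : b ≤ 1) :
    (b - a) / √(1 - a ^ 2) ≤ arcsin b - arcsin a := by
  rcases hab.eq_or_lt with rfl | hab
  · simp
  obtain ⟨c, ⟨hac, hcb⟩, hc⟩ := exists_arcsin_sub_eq (by linarith) hab hb
  rw [hc]
  exact div_le_div_of_nonneg_left (by linarith) (sqrt_pos.2 (by nlinarith))
    (sqrt_le_sqrt (by nlinarith))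

theorem arcsin_sub_le_sub_div_sqrt {a b : ℝ} (ha : 0 ≤ a) (hab : a ≤ b) (hb : b < 1) :
    arcsin b - arcsin a ≤ (b - a) / √(1 - b ^ 2) := by
  rcases hab.eq_or_lt with rfl | hab
  · simp
  obtain ⟨c, ⟨hac, hcb⟩, hc⟩ := exists_arcsin_sub_eq (by linarith) hab hb.le
  rw [hc]
  exact div_le_div_of_nonneg_left (by linarith) (sqrt_pos.2 (by nlinarith))
    (sqrt_le_sqrt (by nlinarith))

theorem hasSum_arcsin_mul_pow_sub {c q : ℝ} (hc : 0 ≤ c) (hq0 : 0 ≤ q) (hq1 : q < 1) :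
    HasSum (fun k : ℕ ↦ arcsin (c * q ^ k) - arcsin (c * q ^ (k + 1))) (arcsin c) := by
  have hlim : Tendsto (fun k : ℕ ↦ arcsin (c * q ^ k)) atTop (𝓝 0) := by
    have hpow := (tendsto_pow_atTop_nhds_zero_of_lt_one hq0 hq1).const_mul c
    rw [mul_zero] at hpow
    simpa [Function.comp_def] using (continuous_arcsin.tendsto 0).comp hpow
  simpa using hasSum_sub_succ_of_antitone
    (monotone_arcsin.comp_antitone fun _ _ h ↦ mul_le_mul_of_nonneg_left
      (pow_right_anti₀ hq0 hq1.le h) hc) hlim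

end Real

section zeta

variable {q s : ℝ}

theorem zeta_natCast_eq (hs : 0 ≤ s) (k : ℕ) :
    zeta q s k = (1 + q) * ((√s * q ^ k - √s * q ^ (k + 1)) / √(1 - (√s * q ^ (k + 1)) ^ 2)) := by
  have hexp : 2 * ((k : ℝ) + 1) = ((2 * (k + 1) : ℕ) : ℝ) := by push_cast; ring
  rw [zeta, hexp, rpow_natCast, rpow_natCast, pow_mul', mul_pow, sq_sqrt hs]
  ring

theorem zeta_natCast_nonneg (hs : 0 ≤ s) (hq0 : 0 ≤ q) (hq1 : q ≤ 1) (k : ℕ) :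
    0 ≤ zeta q s k := by
  rw [zeta_natCast_eq hs]
  have : √s * q ^ (k + 1) ≤ √s * q ^ k :=
    mul_le_mul_of_nonneg_left (pow_le_pow_of_le_one hq0 hq1 k.le_succ) (sqrt_nonneg s)
  have : 0 ≤ √s * q ^ k - √s * q ^ (k + 1) := by linarith
  positivity

theorem zeta_natCast_le (hs0 : 0 ≤ s) (hs1 : s ≤ 1) (hq0 : 0 ≤ q) (hq1 : q ≤ 1) (k : ℕ) :
    zeta q s k ≤ (1 + q) * (arcsin (√s * q ^ k) - arcsin (√s * q ^ (k + 1))) := by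
  rw [zeta_natCast_eq hs0]
  refine mul_le_mul_of_nonneg_left (sub_div_sqrt_le_arcsin_sub (by positivity) ?_ ?_) (by linarith)
  · exact mul_le_mul_of_nonneg_left (pow_le_pow_of_le_one hq0 hq1 k.le_succ) (sqrt_nonneg s)
  · exact mul_le_one₀ (sqrt_le_one.2 hs1) (by positivity) (pow_le_one₀ hq0 hq1)

theorem arcsin_sub_le_zeta_natCast (hs0 : 0 ≤ s) (hs1 : s ≤ 1) (hq0 : 0 ≤ q) (hq1 : q < 1)
    (k : ℕ) :
    (1 + q) * (arcsin (√s * q ^ (k + 1)) - arcsin (√s * q ^ (k + 2))) ≤ q * zeta q s k := by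
  have hlt : √s * q ^ (k + 1) < 1 :=
    mul_lt_one_of_nonneg_of_lt_one_right (sqrt_le_one.2 hs1) (by positivity)
      (pow_lt_one₀ hq0 hq1 k.succ_ne_zero)
  have hmono : √s * q ^ (k + 2) ≤ √s * q ^ (k + 1) :=
    mul_le_mul_of_nonneg_left (pow_le_pow_of_le_one hq0 hq1.le (k + 1).le_succ) (sqrt_nonneg s)
  rw [zeta_natCast_eq hs0]
  calc (1 + q) * (arcsin (√s * q ^ (k + 1)) - arcsin (√s * q ^ (k + 2)))
      ≤ (1 + q) * ((√s * q ^ (k + 1) - √s * q ^ (k + 2)) / √(1 - (√s * q ^ (k + 1)) ^ 2)) :=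
        mul_le_mul_of_nonneg_left (arcsin_sub_le_sub_div_sqrt (by positivity) hmono hlt)
          (by linarith)
    _ = q * ((1 + q) * ((√s * q ^ k - √s * q ^ (k + 1)) / √(1 - (√s * q ^ (k + 1)) ^ 2))) := by
        ring

theorem summable_zeta_natCast (hs0 : 0 ≤ s) (hs1 : s ≤ 1) (hq0 : 0 ≤ q) (hq1 : q < 1) :
    Summable fun k : ℕ ↦ zeta q s k :=
  .of_nonneg_of_le (zeta_natCast_nonneg hs0 hq0 hq1.le) (zeta_natCast_le hs0 hs1 hq0 hq1.le)
    ((hasSum_arcsin_mul_pow_sub (sqrt_nonneg s) hq0 hq1).summable.mul_left _)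

theorem tsum_zeta_natCast_le (hs0 : 0 ≤ s) (hs1 : s ≤ 1) (hq0 : 0 ≤ q) (hq1 : q < 1) :
    ∑' k : ℕ, zeta q s k ≤ (1 + q) * arcsin √s :=
  hasSum_le (zeta_natCast_le hs0 hs1 hq0 hq1.le) (summable_zeta_natCast hs0 hs1 hq0 hq1).hasSum
    ((hasSum_arcsin_mul_pow_sub (sqrt_nonneg s) hq0 hq1).mul_left (1 + q))

theorem le_tsum_zeta_natCast (hs0 : 0 ≤ s) (hs1 : s ≤ 1) (hq0 : 0 < q) (hq1 : q < 1) :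
    (1 + q) / q * arcsin (√s * q) ≤ ∑' k : ℕ, zeta q s k := by
  have hle := hasSum_le (fun k ↦ ?_)
    ((hasSum_arcsin_mul_pow_sub (c := √s * q) (by positivity) hq0.le hq1).mul_left (1 + q))
    ((summable_zeta_natCast hs0 hs1 hq0.le hq1).hasSum.mul_left q)
  · rwa [div_mul_eq_mul_div, div_le_iff₀' hq0]
  · simpa only [mul_assoc, ← pow_succ'] using arcsin_sub_le_zeta_natCast hs0 hs1 hq0.le hq1 k

end zeta

/-- For every fixed `s ∈ [0,1]` one has
`Σ_{k=0}^∞ (1−q²)·q^k·√s / √(1 − s·q^{2(k+1)}) → 2·arcsin(√s)` as `q → 1⁻` on `(0,1)`. -/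
theorem stmt10 (s : ℝ) (hs : s ∈ Set.Icc (0 : ℝ) 1) :
    Filter.Tendsto (fun q : ℝ => ∑' k : ℕ, zeta q s k)
      (nhdsWithin 1 (Set.Ioo (0 : ℝ) 1)) (nhds (2 * Real.arcsin (Real.sqrt s))) := by
  obtain ⟨hs0, hs1⟩ := hs
  have hlower : Tendsto (fun q ↦ (1 + q) / q * arcsin (√s * q)) (𝓝[Ioo 0 1] 1)
      (𝓝 (2 * arcsin √s)) := by
    have : ContinuousAt (fun q ↦ (1 + q) / q * arcsin (√s * q)) 1 := by
      fun_prop (disch := norm_num)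
    simpa [one_add_one_eq_two] using this.tendsto.mono_left nhdsWithin_le_nhds
  have hupper : Tendsto (fun q ↦ (1 + q) * arcsin √s) (𝓝[Ioo 0 1] 1) (𝓝 (2 * arcsin √s)) := by
    have : ContinuousAt (fun q ↦ (1 + q) * arcsin √s) 1 := by fun_prop
    simpa [one_add_one_eq_two] using this.tendsto.mono_left nhdsWithin_le_nhds
  refine tendsto_of_tendsto_of_tendsto_of_le_of_le' hlower hupper ?_ ?_ <;>
    filter_upwards [self_mem_nhdsWithin] with q ⟨hq0, hq1⟩
  · exact le_tsum_zeta_natCast hs0 hs1 hq0 hq1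
  · exact tsum_zeta_natCast_le hs0 hs1 hq0.le hq1
end
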